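/- Let γ > 0 and let x : [0, t₀) → ℝ³ be a continuously differentiable solution of the closed-loop Brockett system ẋ₁ = −γg₁(x)/|g(x)|, ẋ₂ = −γg₂(x)/|g(x)|, ẋ₃ = x₁ẋ₂ − x₂ẋ₁ with σ(x(t)) ≠ 0 and x₃(t) ≠ 0 for all t ∈ [0, t₀). Then the function t ↦ Q(x(t)) is strictly decreasing on [0, t₀) (indeed d/dt Q(x(t)) = −γ|g(x(t))| < 0 for all t ∈ [0, t₀)), and x is bounded on [0, t₀). -/

import Mathlib

/-!
Off the planes `σ = 0` and `x₃ = 0` the goal function `Q` is smooth, and along a curve obeying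
the Brockett constraint `ẋ₃ = x₁ẋ₂ − x₂ẋ₁` its derivative is `g₁ẋ₁ + g₂ẋ₂`: the vector `g` is the
gradient of `Q` in the horizontal directions. The feedback `(ẋ₁, ẋ₂) = −γ g / |g|` therefore gives
`d/dt Q(x(t)) = −γ |g(x(t))|`, which is negative because `g₁ + i g₂` factors as `x₁ + i x₂` times a
complex number that cannot vanish when `x₃ ≠ 0`. Boundedness follows from `|x|² ≤ 3 Q(x)` and
`Q(x(t)) ≤ Q(x(0))`.
-/

/-- `σ x = √(x₁² + x₂²)`. -/
noncomputable def sigmaBI (x : EuclideanSpace ℝ (Fin 3)) : ℝ :=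
  Real.sqrt (x 0 ^ 2 + x 1 ^ 2)

/-- The goal function `Q(x) = (σ(x) − |x₃|)² + x₃²` for the Brockett integrator. -/
noncomputable def QBI (x : EuclideanSpace ℝ (Fin 3)) : ℝ :=
  (sigmaBI x - |x 2|) ^ 2 + (x 2) ^ 2

/-- First component of the speed-gradient vector `g(x)` for the Brockett integrator:
`g₁(x) = 2x₁ − 4x₂x₃ − 2|x₃|x₁/σ(x) + 2 sgn(x₃) x₂ σ(x)`. -/
noncomputable def g1BI (x : EuclideanSpace ℝ (Fin 3)) : ℝ :=
  2 * x 0 - 4 * x 1 * x 2 - 2 * |x 2| * x 0 / sigmaBI x + 2 * Real.sign (x 2) * x 1 * sigmaBI x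

/-- Second component of the speed-gradient vector `g(x)` for the Brockett integrator:
`g₂(x) = 2x₂ + 4x₁x₃ − 2|x₃|x₂/σ(x) − 2 sgn(x₃) x₁ σ(x)`. -/
noncomputable def g2BI (x : EuclideanSpace ℝ (Fin 3)) : ℝ :=
  2 * x 1 + 4 * x 0 * x 2 - 2 * |x 2| * x 1 / sigmaBI x - 2 * Real.sign (x 2) * x 0 * sigmaBI x

/-- The Euclidean norm `|g(x)|` of the speed-gradient vector. -/
noncomputable def ngBI (x : EuclideanSpace ℝ (Fin 3)) : ℝ :=
  Real.sqrt (g1BI x ^ 2 + g2BI x ^ 2)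

/-- The right-hand side of the closed-loop Brockett system
`ẋ₁ = −γg₁(x)/|g(x)|, ẋ₂ = −γg₂(x)/|g(x)|, ẋ₃ = x₁ẋ₂ − x₂ẋ₁`. -/
noncomputable def brockettRHS (γ : ℝ) (y : EuclideanSpace ℝ (Fin 3)) :
    EuclideanSpace ℝ (Fin 3) :=
  (WithLp.equiv 2 (Fin 3 → ℝ)).symm
    ![-γ * g1BI y / ngBI y,
      -γ * g2BI y / ngBI y,
      y 0 * (-γ * g2BI y / ngBI y) - y 1 * (-γ * g1BI y / ngBI y)]

lemma Real.sign_eq_signType_sign (r : ℝ) : Real.sign r = (SignType.sign r : ℝ) := by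
  rcases lt_trichotomy r 0 with h | rfl | h
  · simp [Real.sign_of_neg h, h]
  · simp [Real.sign_zero]
  · simp [Real.sign_of_pos h, h]

lemma sigmaBI_sq (p : EuclideanSpace ℝ (Fin 3)) : sigmaBI p ^ 2 = p 0 ^ 2 + p 1 ^ 2 :=
  Real.sq_sqrt (by positivity)

lemma norm_sq_le_three_mul_QBI (p : EuclideanSpace ℝ (Fin 3)) : ‖p‖ ^ 2 ≤ 3 * QBI p := by
  rw [EuclideanSpace.real_norm_sq_eq, Fin.sum_univ_three, ← sigmaBI_sq, QBI]
  nlinarith [sq_nonneg (2 * sigmaBI p - 3 * |p 2|), sq_abs (p 2)]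

-- `g₁ + i g₂ = (x₁ + i x₂) (2 - 2|x₃|/σ + i (4x₃ - 2 sgn(x₃) σ))`
lemma g1BI_sq_add_g2BI_sq (p : EuclideanSpace ℝ (Fin 3)) :
    g1BI p ^ 2 + g2BI p ^ 2 = (p 0 ^ 2 + p 1 ^ 2) *
      ((2 - 2 * |p 2| / sigmaBI p) ^ 2 + (4 * p 2 - 2 * Real.sign (p 2) * sigmaBI p) ^ 2) := by
  unfold g1BI g2BI
  ring

lemma ngBI_pos {p : EuclideanSpace ℝ (Fin 3)} (hσ : sigmaBI p ≠ 0) (hw : p 2 ≠ 0) :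
    0 < ngBI p := by
  have hσpos : 0 < sigmaBI p := (Real.sqrt_nonneg _).lt_of_ne' hσ
  have hfactor : 0 < (2 - 2 * |p 2| / sigmaBI p) ^ 2 +
      (4 * p 2 - 2 * Real.sign (p 2) * sigmaBI p) ^ 2 := by
    refine (by positivity : (0 : ℝ) ≤ _).lt_of_ne' fun hzero => ?_
    obtain ⟨h1, h2⟩ := (add_eq_zero_iff_of_nonneg (sq_nonneg _) (sq_nonneg _)).1 hzero
    rw [sq_eq_zero_iff, sub_eq_zero] at h1 h2
    field_simp at h1
    rcases hw.lt_or_gt with h | h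
    · rw [abs_of_neg h] at h1
      rw [Real.sign_of_neg h] at h2
      linarith
    · rw [abs_of_pos h] at h1
      rw [Real.sign_of_pos h] at h2
      linarith
  unfold ngBI
  rw [Real.sqrt_pos, g1BI_sq_add_g2BI_sq, ← sigmaBI_sq]
  positivity

lemma hasDerivWithinAt_QBI_comp {y : ℝ → EuclideanSpace ℝ (Fin 3)} {y' : EuclideanSpace ℝ (Fin 3)}
    {s : Set ℝ} {t : ℝ} (hy : HasDerivWithinAt y y' s t) (hσ : sigmaBI (y t) ≠ 0)
    (hw : y t 2 ≠ 0) :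
    HasDerivWithinAt (fun r => QBI (y r))
      (2 * (sigmaBI (y t) - |y t 2|) *
          ((y t 0 * y' 0 + y t 1 * y' 1) / sigmaBI (y t) - Real.sign (y t 2) * y' 2) +
        2 * y t 2 * y' 2) s t := by
  have hcoord (i : Fin 3) : HasDerivWithinAt (fun r => y r i) (y' i) s t :=
    (EuclideanSpace.proj (𝕜 := ℝ) i).hasFDerivAt.comp_hasDerivWithinAt t hy
  have hq : y t 0 ^ 2 + y t 1 ^ 2 ≠ 0 := fun h => hσ (by rw [sigmaBI, h, Real.sqrt_zero])
  have hσ' := (((hcoord 0).pow 2).add ((hcoord 1).pow 2)).sqrt hq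
  have habs := (hasDerivAt_abs hw).comp_hasDerivWithinAt t (hcoord 2)
  refine (((hσ'.sub habs).pow 2).add ((hcoord 2).pow 2)).congr_deriv ?_
  simp only [Pi.sub_apply, Pi.add_apply, Pi.pow_apply, Function.comp_apply]
  rw [Real.sign_eq_signType_sign]
  unfold sigmaBI
  field_simp
  ring

lemma hasDerivWithinAt_QBI_comp_of_horizontal {y : ℝ → EuclideanSpace ℝ (Fin 3)}
    {y' : EuclideanSpace ℝ (Fin 3)} {s : Set ℝ} {t : ℝ} (hy : HasDerivWithinAt y y' s t)
    (hσ : sigmaBI (y t) ≠ 0) (hw : y t 2 ≠ 0) (hy' : y' 2 = y t 0 * y' 1 - y t 1 * y' 0) :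
    HasDerivWithinAt (fun r => QBI (y r)) (g1BI (y t) * y' 0 + g2BI (y t) * y' 1) s t := by
  convert hasDerivWithinAt_QBI_comp hy hσ hw using 1
  rw [hy', g1BI, g2BI, Real.sign_eq_signType_sign]
  field_simp
  linear_combination (-2 * sigmaBI (y t) * (y t 0 * y' 1 - y t 1 * y' 0)) * abs_mul_sign (y t 2)

lemma brockettRHS_horizontal (γ : ℝ) (p : EuclideanSpace ℝ (Fin 3)) :
    brockettRHS γ p 2 = p 0 * brockettRHS γ p 1 - p 1 * brockettRHS γ p 0 := by
  simp [brockettRHS]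

lemma g1BI_mul_add_g2BI_mul_brockettRHS (γ : ℝ) (p : EuclideanSpace ℝ (Fin 3)) :
    g1BI p * brockettRHS γ p 0 + g2BI p * brockettRHS γ p 1 = -γ * ngBI p := by
  have hN : ngBI p ^ 2 = g1BI p ^ 2 + g2BI p ^ 2 := Real.sq_sqrt (by positivity)
  have hRHS0 : brockettRHS γ p 0 = -γ * g1BI p / ngBI p := by simp [brockettRHS]
  have hRHS1 : brockettRHS γ p 1 = -γ * g2BI p / ngBI p := by simp [brockettRHS]
  rw [hRHS0, hRHS1]
  rcases eq_or_ne (ngBI p) 0 with h0 | h0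
  · simp [h0]
  · field_simp
    linear_combination γ * hN

lemma convex_nonneg_coe_lt (t₀ : EReal) : Convex ℝ {s : ℝ | 0 ≤ s ∧ (s : EReal) < t₀} :=
  (Set.ordConnected_Ici.inter
    (Set.ordConnected_Iio.preimage_mono EReal.coe_strictMono.monotone)).convex

/-- Along any continuously differentiable solution of the closed-loop Brockett system on
`[0, t₀)` (with `t₀ ≤ ∞`) staying off the planes `σ = 0` and `x₃ = 0`, the goal function
`Q` is strictly decreasing with `d/dt Q(x(t)) = −γ|g(x(t))| < 0`, and the solution is
bounded. -/
theorem brockett_Q_strictly_decreasing (γ : ℝ) (hγ : 0 < γ) (t₀ : EReal)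
    (x : ℝ → EuclideanSpace ℝ (Fin 3))
    (hode : ∀ t ∈ {s : ℝ | 0 ≤ s ∧ (s : EReal) < t₀},
      HasDerivWithinAt x (brockettRHS γ (x t)) {s : ℝ | 0 ≤ s ∧ (s : EReal) < t₀} t)
    (hoff : ∀ t ∈ {s : ℝ | 0 ≤ s ∧ (s : EReal) < t₀}, sigmaBI (x t) ≠ 0 ∧ x t 2 ≠ 0) :
    StrictAntiOn (fun t => QBI (x t)) {s : ℝ | 0 ≤ s ∧ (s : EReal) < t₀} ∧
      (∀ t ∈ {s : ℝ | 0 ≤ s ∧ (s : EReal) < t₀},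
        HasDerivWithinAt (fun s => QBI (x s)) (-γ * ngBI (x t))
          {s : ℝ | 0 ≤ s ∧ (s : EReal) < t₀} t ∧ -γ * ngBI (x t) < 0) ∧
      ∃ M : ℝ, ∀ t ∈ {s : ℝ | 0 ≤ s ∧ (s : EReal) < t₀}, ‖x t‖ ≤ M := by
  set S := {s : ℝ | 0 ≤ s ∧ (s : EReal) < t₀}
  have hderiv : ∀ t ∈ S, HasDerivWithinAt (fun s => QBI (x s)) (-γ * ngBI (x t)) S t :=
    fun t ht => g1BI_mul_add_g2BI_mul_brockettRHS γ (x t) ▸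
      hasDerivWithinAt_QBI_comp_of_horizontal (hode t ht) (hoff t ht).1 (hoff t ht).2
        (brockettRHS_horizontal γ (x t))
  have hneg : ∀ t ∈ S, -γ * ngBI (x t) < 0 := fun t ht =>
    mul_neg_of_neg_of_pos (neg_lt_zero.2 hγ) (ngBI_pos (hoff t ht).1 (hoff t ht).2)
  have hanti : StrictAntiOn (fun t => QBI (x t)) S :=
    strictAntiOn_of_hasDerivWithinAt_neg (convex_nonneg_coe_lt t₀)
      (fun t ht => (hderiv t ht).continuousWithinAt)
      (fun t ht => (hderiv t (interior_subset ht)).mono interior_subset)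
      (fun t ht => hneg t (interior_subset ht))
  refine ⟨hanti, fun t ht => ⟨hderiv t ht, hneg t ht⟩, √(3 * QBI (x 0)), fun t ht => ?_⟩
  have h0 : (0 : ℝ) ∈ S := ⟨le_rfl, (EReal.coe_le_coe_iff.2 ht.1).trans_lt ht.2⟩
  refine Real.le_sqrt_of_sq_le ((norm_sq_le_three_mul_QBI (x t)).trans ?_)
  gcongr
  exact hanti.antitoneOn h0 ht ht.1
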